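/- arXiv:1710.09020 — 3 statements merged into one kernel-verified Lean document; each statement's English description precedes it below -/
import Mathlib

section
/- For a random vector x in ℝ^d with E(vᵀx)⁴ ≤ R for every unit vector v, and its ℓ₄-norm shrunk version x̃ = min(‖x‖₄, τ)/‖x‖₄ · x, the operator norm of the bias satisfies ‖E(x xᵀ − x̃ x̃ᵀ)‖_op ≤ R√d / τ². -/
open MeasureTheory

/-- Entrywise ℓ₄-norm of a vector. -/
noncomputable def l4norm {d : ℕ} (x : EuclideanSpace ℝ (Fin d)) : ℝ :=
  (∑ j, (x j) ^ 4) ^ ((1 : ℝ) / 4)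

/-- ℓ₄-norm shrinkage of a vector at threshold τ. -/
noncomputable def shrink {d : ℕ} (τ : ℝ) (x : EuclideanSpace ℝ (Fin d)) :
    EuclideanSpace ℝ (Fin d) :=
  (min (l4norm x) τ / l4norm x) • x

/-! Write `L = ‖y‖₄`. The shrinkage only acts when `L > τ`, so pointwise
`τ² (⟨v,y⟩² - ⟨v,ỹ⟩²) ≤ ⟨v,y⟩² L²`. Integrating the weighted AM–GM inequality
`2ab ≤ s a² + b² / s` with `s = √d` (a Cauchy–Schwarz in disguise) bounds the expectation of the
right side by `(√d E⟨v,x⟩⁴ + E L⁴ / √d) / 2`, and `E L⁴ = ∑ⱼ E xⱼ⁴ ≤ d R` because each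
coordinate is the inner product with a unit vector. -/

section Shrinkage

variable {d : ℕ}

lemma l4norm_nonneg (y : EuclideanSpace ℝ (Fin d)) : 0 ≤ l4norm y :=
  Real.rpow_nonneg (Finset.sum_nonneg fun _ _ => by positivity) _

lemma l4norm_pow_four (y : EuclideanSpace ℝ (Fin d)) : l4norm y ^ 4 = ∑ j, y j ^ 4 := by
  rw [l4norm, ← Real.rpow_natCast,
    ← Real.rpow_mul (Finset.sum_nonneg fun _ _ => by positivity)]
  norm_num

lemma eq_zero_of_l4norm_eq_zero {y : EuclideanSpace ℝ (Fin d)} (h : l4norm y = 0) : y = 0 := by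
  have hsum : ∑ j, y j ^ 4 = 0 := by rw [← l4norm_pow_four, h, zero_pow four_ne_zero]
  ext j
  simpa using (Finset.sum_eq_zero_iff_of_nonneg fun j _ => by positivity).1 hsum j
    (Finset.mem_univ j)

lemma shrink_eq_self_of_l4norm_le {τ : ℝ} {y : EuclideanSpace ℝ (Fin d)}
    (h : l4norm y ≤ τ) : shrink τ y = y := by
  rcases (l4norm_nonneg y).eq_or_lt with h0 | h0
  · rw [eq_zero_of_l4norm_eq_zero h0.symm, shrink, smul_zero]
  · rw [shrink, min_eq_left h, div_self h0.ne', one_smul]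

lemma inner_shrink (τ : ℝ) (v y : EuclideanSpace ℝ (Fin d)) :
    inner ℝ v (shrink τ y) = min (l4norm y) τ / l4norm y * inner ℝ v y :=
  real_inner_smul_right _ _ _

lemma sq_inner_shrink_le {τ : ℝ} (hτ : 0 ≤ τ) (v y : EuclideanSpace ℝ (Fin d)) :
    inner ℝ v (shrink τ y) ^ 2 ≤ inner ℝ v y ^ 2 := by
  have hc₀ : 0 ≤ min (l4norm y) τ / l4norm y :=
    div_nonneg (le_min (l4norm_nonneg y) hτ) (l4norm_nonneg y)
  have hc₁ : min (l4norm y) τ / l4norm y ≤ 1 :=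
    div_le_one_of_le₀ (min_le_left _ _) (l4norm_nonneg y)
  rw [inner_shrink, mul_pow]
  exact mul_le_of_le_one_left (sq_nonneg _) (pow_le_one₀ hc₀ hc₁)

lemma sq_mul_sub_sq_inner_shrink_le {τ : ℝ} (hτ : 0 ≤ τ) (v y : EuclideanSpace ℝ (Fin d)) :
    τ ^ 2 * (inner ℝ v y ^ 2 - inner ℝ v (shrink τ y) ^ 2) ≤
      inner ℝ v y ^ 2 * l4norm y ^ 2 := by
  rcases le_or_gt (l4norm y) τ with h | h
  · rw [shrink_eq_self_of_l4norm_le h, sub_self, mul_zero]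
    positivity
  · have hτ₂ : τ ^ 2 ≤ l4norm y ^ 2 := pow_le_pow_left₀ hτ h.le 2
    calc τ ^ 2 * (inner ℝ v y ^ 2 - inner ℝ v (shrink τ y) ^ 2)
        ≤ l4norm y ^ 2 * inner ℝ v y ^ 2 := by
          gcongr
          · exact sub_nonneg.2 (sq_inner_shrink_le hτ v y)
          · exact sub_le_self _ (sq_nonneg _)
      _ = inner ℝ v y ^ 2 * l4norm y ^ 2 := mul_comm _ _

lemma inner_single_one_left (j : Fin d) (y : EuclideanSpace ℝ (Fin d)) :
    inner ℝ (EuclideanSpace.single j (1 : ℝ)) y = y j := by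
  simp [EuclideanSpace.inner_single_left]

variable {Ω : Type*} [MeasurableSpace Ω] {μ : Measure Ω} {x : Ω → EuclideanSpace ℝ (Fin d)}

lemma integrable_apply_pow_four (hint : ∀ v, Integrable (fun ω => inner ℝ v (x ω) ^ 4) μ)
    (j : Fin d) : Integrable (fun ω => x ω j ^ 4) μ := by
  simpa only [inner_single_one_left] using hint (EuclideanSpace.single j 1)

lemma integrable_l4norm_pow_four
    (hint : ∀ v, Integrable (fun ω => inner ℝ v (x ω) ^ 4) μ) :
    Integrable (fun ω => l4norm (x ω) ^ 4) μ := by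
  simp_rw [l4norm_pow_four]
  exact integrable_finsetSum _ fun j _ => integrable_apply_pow_four hint j

lemma integral_l4norm_pow_four_le {R : ℝ}
    (hint : ∀ v, Integrable (fun ω => inner ℝ v (x ω) ^ 4) μ)
    (hR : ∀ v : EuclideanSpace ℝ (Fin d), ‖v‖ = 1 → ∫ ω, inner ℝ v (x ω) ^ 4 ∂μ ≤ R) :
    ∫ ω, l4norm (x ω) ^ 4 ∂μ ≤ d * R := by
  have hcoord_le (j : Fin d) : ∫ ω, x ω j ^ 4 ∂μ ≤ R := by
    simpa only [inner_single_one_left] using hR (EuclideanSpace.single j 1) (by simp)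
  simp_rw [l4norm_pow_four]
  rw [integral_finsetSum _ fun j _ => integrable_apply_pow_four hint j]
  simpa using Finset.sum_le_sum fun j (_ : j ∈ Finset.univ) => hcoord_le j

end Shrinkage

lemma two_mul_le_mul_sq_add_sq_div {a b s : ℝ} (hs : 0 < s) :
    2 * (a * b) ≤ s * a ^ 2 + b ^ 2 / s := by
  rw [← sub_nonneg]
  have : s * a ^ 2 + b ^ 2 / s - 2 * (a * b) = (s * a - b) ^ 2 / s := by field_simp; ring
  rw [this]
  positivity

lemma integral_le_of_le_mul {Ω : Type*} [MeasurableSpace Ω] {μ : Measure Ω}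
    {f p q : Ω → ℝ} {A B s : ℝ} (hs : 0 < s)
    (hp : Integrable (fun ω => p ω ^ 2) μ) (hq : Integrable (fun ω => q ω ^ 2) μ)
    (hA : ∫ ω, p ω ^ 2 ∂μ ≤ A) (hB : ∫ ω, q ω ^ 2 ∂μ ≤ B)
    (hf₀ : 0 ≤ᵐ[μ] f) (hf : ∀ᵐ ω ∂μ, f ω ≤ p ω * q ω) :
    ∫ ω, f ω ∂μ ≤ (s * A + B / s) / 2 := by
  have hg : Integrable (fun ω => (s * p ω ^ 2 + q ω ^ 2 / s) / 2) μ :=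
    ((hp.const_mul s).add (hq.div_const s)).div_const 2
  calc ∫ ω, f ω ∂μ ≤ ∫ ω, (s * p ω ^ 2 + q ω ^ 2 / s) / 2 ∂μ :=
        integral_mono_of_nonneg hf₀ hg <| hf.mono fun ω h => by
          linarith [two_mul_le_mul_sq_add_sq_div (a := p ω) (b := q ω) hs]
    _ = (s * ∫ ω, p ω ^ 2 ∂μ + (∫ ω, q ω ^ 2 ∂μ) / s) / 2 := by
        rw [integral_div, integral_add (hp.const_mul s) (hq.div_const s), integral_const_mul,
          integral_div]
    _ ≤ (s * A + B / s) / 2 := by gcongr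

/-- The bias matrix `E(x xᵀ − x̃ x̃ᵀ)` is symmetric, so its operator norm is bounded through its
quadratic form on unit vectors. -/
theorem shrinkage_bias_opNorm_general {d : ℕ} {Ω : Type*} [MeasurableSpace Ω]
    (μ : Measure Ω)
    (x : Ω → EuclideanSpace ℝ (Fin d)) (R τ : ℝ) (hτ : 0 < τ)
    (hint : ∀ v : EuclideanSpace ℝ (Fin d),
      Integrable (fun ω => (inner ℝ v (x ω) : ℝ) ^ 4) μ)
    (hR : ∀ v : EuclideanSpace ℝ (Fin d), ‖v‖ = 1 →
      ∫ ω, (inner ℝ v (x ω) : ℝ) ^ 4 ∂μ ≤ R) :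
    ∀ v : EuclideanSpace ℝ (Fin d), ‖v‖ = 1 →
      |∫ ω, ((inner ℝ v (x ω) : ℝ) ^ 2 - (inner ℝ v (shrink τ (x ω)) : ℝ) ^ 2) ∂μ|
        ≤ R * Real.sqrt d / τ ^ 2 := by
  intro v hv
  have hd : 0 < d := Nat.pos_of_ne_zero fun h => by
    subst h
    simp [Subsingleton.elim v 0] at hv
  have hsd : 0 < Real.sqrt d := Real.sqrt_pos.2 (Nat.cast_pos.2 hd)
  have hbias₀ (ω : Ω) : 0 ≤ inner ℝ v (x ω) ^ 2 - inner ℝ v (shrink τ (x ω)) ^ 2 :=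
    sub_nonneg.2 (sq_inner_shrink_le hτ.le v (x ω))
  have key := integral_le_of_le_mul (μ := μ) (A := R) (B := d * R) hsd
    (by simpa only [← pow_mul] using hint v)
    (by simpa only [← pow_mul] using integrable_l4norm_pow_four hint)
    (by simpa only [← pow_mul] using hR v hv)
    (by simpa only [← pow_mul] using integral_l4norm_pow_four_le hint hR)
    (ae_of_all _ fun ω => mul_nonneg (sq_nonneg τ) (hbias₀ ω))
    (ae_of_all _ fun ω => sq_mul_sub_sq_inner_shrink_le hτ.le v (x ω))
  rw [abs_of_nonneg (integral_nonneg hbias₀), le_div_iff₀ (by positivity), mul_comm,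
    ← integral_const_mul]
  refine key.trans_eq ?_
  field_simp
  rw [Real.sq_sqrt (Nat.cast_nonneg d)]
  ring

/-- operator-norm bias bound ‖E(x xᵀ − x̃ x̃ᵀ)‖_op ≤ R√d / τ²,
stated via the quadratic form over unit vectors (the matrix is symmetric). -/
theorem shrinkage_bias_opNorm {d : ℕ} {Ω : Type*} [MeasurableSpace Ω]
    (μ : Measure Ω) [IsProbabilityMeasure μ]
    (x : Ω → EuclideanSpace ℝ (Fin d)) (R τ : ℝ) (hτ : 0 < τ)
    (hmeas : AEMeasurable x μ)
    (hint : ∀ v : EuclideanSpace ℝ (Fin d),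
      Integrable (fun ω => (inner ℝ v (x ω) : ℝ) ^ 4) μ)
    (hR : ∀ v : EuclideanSpace ℝ (Fin d), ‖v‖ = 1 →
      ∫ ω, (inner ℝ v (x ω) : ℝ) ^ 4 ∂μ ≤ R) :
    ∀ v : EuclideanSpace ℝ (Fin d), ‖v‖ = 1 →
      |∫ ω, ((inner ℝ v (x ω) : ℝ) ^ 2 - (inner ℝ v (shrink τ (x ω)) : ℝ) ^ 2) ∂μ|
        ≤ R * Real.sqrt d / τ ^ 2 :=
  shrinkage_bias_opNorm_general μ x R τ hτ hint hR
end

section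
/- Elementwise clipping bias bound: if x_j, x_k are random variables with E(x_j² x_k²) ≤ R and E x_j⁴, E x_k⁴ ≤ R, then for clipped versions x̃_j = sign(x_j)min(|x_j|, τ), x̃_k = sign(x_k)min(|x_k|, τ), |E(x̃_j x̃_k − x_j x_k)| ≤ √2 R / τ². -/
/-! Clipping rescales a number by a factor in `[0, 1]`, so the bias `x̃_j x̃_k - x_j x_k` is at most
`|x_j x_k|` in absolute value, and it vanishes off the tail event `A = {|x_j| ≥ τ} ∪ {|x_k| ≥ τ}`.
By Cauchy–Schwarz, `E (|x_j x_k| 1_A) ≤ √(E x_j² x_k²) √(P A)`, and Markov's inequality for the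
fourth moments gives `P A ≤ 2R / τ⁴`. -/

open MeasureTheory

/-- Clipping of a real number at threshold τ. -/
noncomputable def clip (τ t : ℝ) : ℝ := Real.sign t * min |t| τ

theorem Real.sign_mul_abs (r : ℝ) : Real.sign r * |r| = r := by
  rcases lt_trichotomy r 0 with h | rfl | h
  · rw [Real.sign_of_neg h, abs_of_neg h, neg_one_mul, neg_neg]
  · rw [abs_zero, mul_zero]
  · rw [Real.sign_of_pos h, abs_of_pos h, one_mul]

theorem clip_eq_min_div_abs_mul (τ t : ℝ) : clip τ t = min |t| τ / |t| * t := by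
  rcases eq_or_ne t 0 with rfl | ht
  · simp [clip]
  · rw [clip]
    field_simp
    linear_combination min |t| τ * Real.sign_mul_abs t

theorem clip_of_abs_le {τ t : ℝ} (h : |t| ≤ τ) : clip τ t = t := by
  rw [clip, min_eq_left h, Real.sign_mul_abs]

theorem abs_clip_mul_clip_sub_mul_le {τ : ℝ} (hτ : 0 ≤ τ) (s t : ℝ) :
    |clip τ s * clip τ t - s * t| ≤ |s * t| := by
  have hfactor (r : ℝ) : 0 ≤ min |r| τ / |r| ∧ min |r| τ / |r| ≤ 1 :=
    ⟨by positivity, div_le_one_of_le₀ (min_le_left _ _) (abs_nonneg r)⟩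
  obtain ⟨hs₀, hs₁⟩ := hfactor s
  obtain ⟨ht₀, ht₁⟩ := hfactor t
  rw [clip_eq_min_div_abs_mul, clip_eq_min_div_abs_mul,
    show ∀ a b : ℝ, a * s * (b * t) - s * t = (a * b - 1) * (s * t) from fun a b => by ring,
    abs_mul]
  refine mul_le_of_le_one_left (abs_nonneg _) (abs_le.2 ⟨?_, ?_⟩) <;>
    nlinarith [mul_nonneg hs₀ ht₀]

section

variable {Ω : Type*} [MeasurableSpace Ω] {μ : Measure Ω}

theorem measureReal_le_abs_le_integral_pow_div {f : Ω → ℝ} {τ : ℝ} (hτ : 0 < τ) {n : ℕ}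
    (hn : n ≠ 0) (hf : Integrable (fun ω => |f ω| ^ n) μ) :
    μ.real {ω | τ ≤ |f ω|} ≤ (∫ ω, |f ω| ^ n ∂μ) / τ ^ n := by
  have hset : {ω | τ ≤ |f ω|} = {ω | τ ^ n ≤ |f ω| ^ n} := by
    ext ω
    exact (pow_le_pow_iff_left₀ hτ.le (abs_nonneg _) hn).symm
  rw [hset, le_div_iff₀ (by positivity), mul_comm]
  exact mul_meas_ge_le_integral_of_nonneg (ae_of_all _ fun ω => by positivity) hf _

theorem setIntegral_abs_le_sqrt_integral_sq_mul_sqrt [IsFiniteMeasure μ] {f : Ω → ℝ}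
    (hf : MemLp f 2 μ) (s : Set Ω) :
    ∫ ω in s, |f ω| ∂μ ≤ √(∫ ω, f ω ^ 2 ∂μ) * √(μ.real s) := by
  have hCS := integral_mul_le_Lp_mul_Lq_of_nonneg (μ := μ.restrict s)
    Real.HolderConjugate.two_two (f := fun ω => |f ω|) (g := fun _ => (1 : ℝ))
    (ae_of_all _ fun ω => abs_nonneg _) (ae_of_all _ fun _ => zero_le_one)
    (by rw [ENNReal.ofReal_ofNat]; exact (hf.restrict s).abs) (by simpa using memLp_const 1)
  simp only [mul_one, sq_abs, Real.rpow_two, one_pow, integral_const, smul_eq_mul,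
    measureReal_restrict_apply_univ, ← Real.sqrt_eq_rpow] at hCS
  refine hCS.trans (mul_le_mul_of_nonneg_right ?_ (Real.sqrt_nonneg _))
  exact Real.sqrt_le_sqrt
    (setIntegral_le_integral hf.integrable_sq (ae_of_all _ fun ω => sq_nonneg (f ω)))

theorem integral_abs_clip_mul_clip_sub_mul_le {τ : ℝ} (hτ : 0 ≤ τ) {f g : Ω → ℝ}
    (hfg : Integrable (fun ω => f ω * g ω) μ) :
    ∫ ω, |clip τ (f ω) * clip τ (g ω) - f ω * g ω| ∂μ
      ≤ ∫ ω in {ω | τ ≤ |f ω|} ∪ {ω | τ ≤ |g ω|}, |f ω * g ω| ∂μ := by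
  rw [← setIntegral_eq_integral_of_forall_compl_eq_zero fun ω hω => ?_]
  · exact integral_mono_of_nonneg (ae_of_all _ fun _ => abs_nonneg _) hfg.abs.integrableOn
      (ae_of_all _ fun _ => abs_clip_mul_clip_sub_mul_le hτ _ _)
  · obtain ⟨hf, hg⟩ := not_or.1 hω
    rw [clip_of_abs_le (not_le.1 hf).le, clip_of_abs_le (not_le.1 hg).le, sub_self, abs_zero]

end

theorem elementwise_clipping_bias_general {Ω : Type*} [MeasurableSpace Ω]
    (μ : Measure Ω) [IsProbabilityMeasure μ]
    (xj xk : Ω → ℝ) (R τ : ℝ) (hτ : 0 < τ)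
    (hjk : Integrable (fun ω => (xj ω) ^ 2 * (xk ω) ^ 2) μ)
    (hj4 : Integrable (fun ω => (xj ω) ^ 4) μ)
    (hk4 : Integrable (fun ω => (xk ω) ^ 4) μ)
    (hintp : Integrable (fun ω => xj ω * xk ω) μ)
    (hRjk : ∫ ω, (xj ω) ^ 2 * (xk ω) ^ 2 ∂μ ≤ R)
    (hRj : ∫ ω, (xj ω) ^ 4 ∂μ ≤ R) (hRk : ∫ ω, (xk ω) ^ 4 ∂μ ≤ R) :
    |∫ ω, (clip τ (xj ω) * clip τ (xk ω) - xj ω * xk ω) ∂μ|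
      ≤ Real.sqrt 2 * R / τ ^ 2 := by
  have hR : 0 ≤ R := (integral_nonneg fun ω => by positivity).trans hRj
  have hmarkov (x : Ω → ℝ) (hx : Integrable (fun ω => x ω ^ 4) μ) (hRx : ∫ ω, x ω ^ 4 ∂μ ≤ R) :
      μ.real {ω | τ ≤ |x ω|} ≤ R / τ ^ 4 := by
    have habs (ω : Ω) : |x ω| ^ 4 = x ω ^ 4 := (even_two_mul 2).pow_abs (x ω)
    simp only [← habs] at hx hRx
    exact (measureReal_le_abs_le_integral_pow_div hτ four_ne_zero hx).trans (by gcongr)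
  have htail : μ.real ({ω | τ ≤ |xj ω|} ∪ {ω | τ ≤ |xk ω|}) ≤ 2 * R / τ ^ 4 := by
    rw [mul_div_assoc, two_mul]
    exact (measureReal_union_le _ _).trans (add_le_add (hmarkov xj hj4 hRj) (hmarkov xk hk4 hRk))
  have hprod : MemLp (fun ω => xj ω * xk ω) 2 μ :=
    (memLp_two_iff_integrable_sq hintp.aestronglyMeasurable).2 (by simpa only [mul_pow] using hjk)
  calc |∫ ω, (clip τ (xj ω) * clip τ (xk ω) - xj ω * xk ω) ∂μ|
      ≤ ∫ ω, |clip τ (xj ω) * clip τ (xk ω) - xj ω * xk ω| ∂μ := abs_integral_le_integral_abs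
    _ ≤ ∫ ω in {ω | τ ≤ |xj ω|} ∪ {ω | τ ≤ |xk ω|}, |xj ω * xk ω| ∂μ :=
      integral_abs_clip_mul_clip_sub_mul_le hτ.le hintp
    _ ≤ √(∫ ω, (xj ω * xk ω) ^ 2 ∂μ) * √(μ.real ({ω | τ ≤ |xj ω|} ∪ {ω | τ ≤ |xk ω|})) :=
      setIntegral_abs_le_sqrt_integral_sq_mul_sqrt hprod _
    _ ≤ √R * √(2 * R / τ ^ 4) := by
      gcongr
      simpa only [mul_pow] using hRjk
    _ = √2 * R / τ ^ 2 := by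
      rw [← Real.sqrt_mul hR, show R * (2 * R / τ ^ 4) = (√2 * R / τ ^ 2) ^ 2 by
        rw [div_pow, mul_pow, Real.sq_sqrt zero_le_two]; ring]
      exact Real.sqrt_sq (by positivity)

/-- elementwise clipping bias bound |E(x̃_j x̃_k − x_j x_k)| ≤ √2·R/τ². -/
theorem elementwise_clipping_bias {Ω : Type*} [MeasurableSpace Ω]
    (μ : Measure Ω) [IsProbabilityMeasure μ]
    (xj xk : Ω → ℝ) (R τ : ℝ) (hτ : 0 < τ)
    (hmj : AEMeasurable xj μ) (hmk : AEMeasurable xk μ)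
    (hjk : Integrable (fun ω => (xj ω) ^ 2 * (xk ω) ^ 2) μ)
    (hj4 : Integrable (fun ω => (xj ω) ^ 4) μ)
    (hk4 : Integrable (fun ω => (xk ω) ^ 4) μ)
    (hintp : Integrable (fun ω => xj ω * xk ω) μ)
    (hRjk : ∫ ω, (xj ω) ^ 2 * (xk ω) ^ 2 ∂μ ≤ R)
    (hRj : ∫ ω, (xj ω) ^ 4 ∂μ ≤ R) (hRk : ∫ ω, (xk ω) ^ 4 ∂μ ≤ R) :
    |∫ ω, (clip τ (xj ω) * clip τ (xk ω) - xj ω * xk ω) ∂μ|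
      ≤ Real.sqrt 2 * R / τ ^ 2 :=
  elementwise_clipping_bias_general μ xj xk R τ hτ hjk hj4 hk4 hintp hRjk hRj hRk
end

section
/- Localized strong convexity implies error bound: if a differentiable convex function L on ℝ^d satisfies δL(β* + Δ; β*) ≥ κ‖Δ‖₂² − τ_L for all ‖Δ‖₂ ≤ r, and β̂ minimizes L with the intermediate point β_η = β* + η(β̂ − β*) where η = min(1, r/‖β̂ − β*‖₂), then ‖β_η − β*‖₂ ≤ ‖∇L(β*)‖₂/κ + √(τ_L/κ). -/
/-!
The point `β_η` lies on the segment from `β*` to the minimizer `β̂`, so by convexity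
`L(β_η) ≤ L(β*)`, and the choice of `η` keeps `Δ = β_η − β*` inside the ball of radius `r`
where the curvature bound applies. Together with Cauchy–Schwarz this gives the quadratic
inequality `κ‖Δ‖² − τ_L ≤ ‖∇L(β*)‖ ‖Δ‖`, whose solution is the claimed bound.
-/

open Real

theorem le_div_add_sqrt_div_of_mul_sq_sub_le {κ a τ t : ℝ} (hκ : 0 < κ) (ha : 0 ≤ a)
    (ht : 0 ≤ t) (h : κ * t ^ 2 - τ ≤ a * t) : t ≤ a / κ + √(τ / κ) := by
  set s := √(τ / κ)
  have hs : 0 ≤ s := sqrt_nonneg _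
  -- `s² = max (τ / κ) 0`, so `κ s² ≥ τ` even when `τ < 0`.
  have hτ : τ ≤ κ * s ^ 2 := by
    rw [sq_sqrt', ← div_le_iff₀' hκ]
    exact le_max_left _ _
  suffices κ * (t - s) ≤ a by
    rw [← sub_le_iff_le_add, le_div_iff₀' hκ]
    exact this
  rcases (add_nonneg ht hs).eq_or_lt with h0 | hpos
  · nlinarith
  · -- `κ (t - s) (t + s) ≤ κ t² - τ ≤ a t ≤ a (t + s)`
    refine le_of_mul_le_mul_right ?_ hpos
    nlinarith [mul_nonneg ha hs]

theorem norm_min_one_div_norm_smul_le {E : Type*} [SeminormedAddCommGroup E]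
    [NormedSpace ℝ E] {r : ℝ} (hr : 0 ≤ r) (v : E) : ‖min 1 (r / ‖v‖) • v‖ ≤ r := by
  rw [norm_smul, norm_of_nonneg (le_min zero_le_one (by positivity))]
  rcases (norm_nonneg v).eq_or_lt with hv | hv
  · simp [← hv, hr]
  · calc min 1 (r / ‖v‖) * ‖v‖ ≤ r / ‖v‖ * ‖v‖ := by gcongr; exact min_le_right _ _
      _ = r := div_mul_cancel₀ r hv.ne'

theorem ConvexOn.apply_add_smul_sub_le {E : Type*} [AddCommGroup E] [Module ℝ E] {f : E → ℝ}
    (hf : ConvexOn ℝ Set.univ f) {x y : E} (hxy : f y ≤ f x) {η : ℝ} (hη₀ : 0 ≤ η)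
    (hη₁ : η ≤ 1) : f (x + η • (y - x)) ≤ f x := by
  have hmem : x + η • (y - x) ∈ segment ℝ x y := by
    rw [segment_eq_image']
    exact ⟨η, ⟨hη₀, hη₁⟩, rfl⟩
  simpa [max_eq_left hxy] using hf.le_max_of_mem_segment trivial trivial hmem

theorem localized_rsc_error_bound_general {d : ℕ}
    (L : EuclideanSpace ℝ (Fin d) → ℝ)
    (hconv : ConvexOn ℝ Set.univ L)
    (βs βhat : EuclideanSpace ℝ (Fin d))
    (κ τL r : ℝ) (hκ : 0 < κ) (hr : 0 < r)
    (hrsc : ∀ Δ : EuclideanSpace ℝ (Fin d), ‖Δ‖ ≤ r →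
      L (βs + Δ) - L βs - (inner ℝ (gradient L βs) Δ : ℝ) ≥ κ * ‖Δ‖ ^ 2 - τL)
    (hmin : ∀ β, L βhat ≤ L β)
    (η : ℝ) (hη : η = min 1 (r / ‖βhat - βs‖)) :
    ‖(βs + η • (βhat - βs)) - βs‖ ≤ ‖gradient L βs‖ / κ + Real.sqrt (τL / κ) := by
  subst hη
  rw [add_sub_cancel_left]
  set g := gradient L βs
  set Δ := min 1 (r / ‖βhat - βs‖) • (βhat - βs)
  have hΔr : ‖Δ‖ ≤ r := norm_min_one_div_norm_smul_le hr.le _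
  have hdescent : L (βs + Δ) ≤ L βs :=
    hconv.apply_add_smul_sub_le (hmin βs) (le_min zero_le_one (by positivity))
      (min_le_left _ _)
  have hcs : -inner ℝ g Δ ≤ ‖g‖ * ‖Δ‖ := neg_le.mpr (abs_le.mp (abs_real_inner_le_norm g Δ)).1
  refine le_div_add_sqrt_div_of_mul_sq_sub_le hκ (norm_nonneg g) (norm_nonneg Δ) ?_
  linarith [hrsc Δ hΔr]

/-- localized strong convexity implies the error bound
‖β_η − β*‖₂ ≤ ‖∇L(β*)‖₂/κ + √(τ_L/κ). -/
theorem localized_rsc_error_bound {d : ℕ}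
    (L : EuclideanSpace ℝ (Fin d) → ℝ)
    (hdiff : Differentiable ℝ L)
    (hconv : ConvexOn ℝ Set.univ L)
    (βs βhat : EuclideanSpace ℝ (Fin d))
    (κ τL r : ℝ) (hκ : 0 < κ) (hτL : 0 ≤ τL) (hr : 0 < r)
    (hrsc : ∀ Δ : EuclideanSpace ℝ (Fin d), ‖Δ‖ ≤ r →
      L (βs + Δ) - L βs - (inner ℝ (gradient L βs) Δ : ℝ) ≥ κ * ‖Δ‖ ^ 2 - τL)
    (hmin : ∀ β, L βhat ≤ L β)
    (η : ℝ) (hη : η = min 1 (r / ‖βhat - βs‖)) :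
    ‖(βs + η • (βhat - βs)) - βs‖ ≤ ‖gradient L βs‖ / κ + Real.sqrt (τL / κ) :=
  localized_rsc_error_bound_general L hconv βs βhat κ τL r hκ hr hrsc hmin η hη
end
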